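/- Let R be an N×N positive semidefinite Hermitian complex matrix of rank ρ ≥ 1 with smallest nonzero eigenvalue σ², let R^{1/2} denote its positive semidefinite square root, let n_t ≥ 1, and let D be an invertible Nn_t × Nn_t complex matrix. Set Θ = (R^{1/2} ⊗ I_{n_t}) (D D†) (R^{1/2} ⊗ I_{n_t}) and p = Nn_t. Then for every i with 1 ≤ i ≤ ρn_t, the i-th smallest nonzero eigenvalue of Θ satisfies λ_{p−ρn_t+i}(Θ) ≥ σ² · λ_i(D D†). -/

import Mathlib

/-!
Write `Θ = B A B` with `B = R^{1/2} ⊗ I` Hermitian and `A = D Dᴴ`. By the Courant–Fischer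
characterisation it suffices to exhibit a subspace `W` of dimension `ρ n_t - i + 1` on which
`x* Θ x ≥ σ² λ_i(A) ‖x‖²`. Let `U` be spanned by the vectors `u ⊗ e_β`, with `u` running over
eigenvectors of `R` for its top `ρ` eigenvalues (all `≥ σ²`): it has dimension `ρ n_t`, and
`‖B x‖² = x* (R ⊗ I) x ≥ σ² ‖x‖²` on it. Let `V` be spanned by eigenvectors of `A` for its top
`N n_t - i + 1` eigenvalues, so that `y* A y ≥ λ_i(A) ‖y‖²` on `V`. Then `W = U ∩ B⁻¹ V` works:
`x* Θ x = (B x)* A (B x) ≥ λ_i(A) ‖B x‖² ≥ σ² λ_i(A) ‖x‖²` and `dim W ≥ dim U + dim V - N n_t`.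
-/

open Matrix
open scoped Kronecker ComplexOrder

open Classical in
/-- The eigenvalues of a Hermitian complex matrix, sorted in ascending order,
`eigAsc M k` being the `(k+1)`-th smallest eigenvalue (so `eigAsc M (k-1)` is `λ_k`
in the 1-based indexing `λ_1 ≤ λ_2 ≤ ⋯`). Junk value `0` if `M` is not Hermitian
or `k` is out of range. -/
noncomputable def eigAsc {n : Type*} [Fintype n] [DecidableEq n]
    (M : Matrix n n ℂ) (k : ℕ) : ℝ :=
  if hM : M.IsHermitian then
    ((Finset.univ.val.map hM.eigenvalues).sort (· ≤ ·)).getD k 0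
  else 0

/-- The positive semidefinite square root of a positive semidefinite matrix
(restored: `Matrix.PosSemidef.sqrt` no longer exists in Mathlib). -/
noncomputable def Matrix.PosSemidef.sqrt {n 𝕜 : Type*} [Fintype n] [DecidableEq n] [RCLike 𝕜]
    {A : Matrix n n 𝕜} (hA : A.PosSemidef) : Matrix n n 𝕜 :=
  (hA.1.eigenvectorUnitary : Matrix n n 𝕜) *
    diagonal ((↑) ∘ (fun x : ℝ => Real.sqrt x) ∘ hA.1.eigenvalues) *
    (star hA.1.eigenvectorUnitary : Matrix n n 𝕜)

open scoped InnerProductSpace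

section Rayleigh

variable {𝕜 E ι : Type*} [RCLike 𝕜] [NormedAddCommGroup E] [InnerProductSpace 𝕜 E] [Fintype ι]
  {v : ι → E} {T : E →ₗ[𝕜] E} {μ : ι → ℝ} {c : ℝ} {x : E}

theorem Orthonormal.re_inner_apply_eq_sum (hv : Orthonormal 𝕜 v)
    (hT : ∀ i, T (v i) = (μ i : 𝕜) • v i) (l : ι → 𝕜) :
    RCLike.re ⟪∑ i, l i • v i, T (∑ i, l i • v i)⟫_𝕜 = ∑ i, μ i * ‖l i‖ ^ 2 := by
  have hTx : T (∑ i, l i • v i) = ∑ i, (μ i * l i) • v i := by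
    simp only [map_sum, map_smul, hT, smul_smul, mul_comm]
  rw [hTx, sum_inner, map_sum]
  refine Finset.sum_congr rfl fun i _ => ?_
  rw [inner_smul_left, hv.inner_right_fintype, ← mul_assoc, mul_comm _ (μ i : 𝕜), mul_assoc,
    RCLike.conj_mul, ← RCLike.ofReal_pow, ← RCLike.ofReal_mul, RCLike.ofReal_re]

theorem Orthonormal.mul_norm_sq_le_re_inner_apply (hv : Orthonormal 𝕜 v)
    (hT : ∀ i, T (v i) = (μ i : 𝕜) • v i) (hc : ∀ i, c ≤ μ i)
    (hx : x ∈ Submodule.span 𝕜 (Set.range v)) :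
    c * ‖x‖ ^ 2 ≤ RCLike.re ⟪x, T x⟫_𝕜 := by
  obtain ⟨l, rfl⟩ := (Submodule.mem_span_range_iff_exists_fun 𝕜).mp hx
  have hnorm := hv.re_inner_apply_eq_sum (T := LinearMap.id) (μ := 1) (by simp) l
  rw [LinearMap.id_apply, inner_self_eq_norm_sq] at hnorm
  rw [hv.re_inner_apply_eq_sum hT, hnorm, Finset.mul_sum]
  exact Finset.sum_le_sum fun i _ => by
    simpa using mul_le_mul_of_nonneg_right (hc i) (sq_nonneg ‖l i‖)

theorem Orthonormal.re_inner_apply_le_mul_norm_sq (hv : Orthonormal 𝕜 v)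
    (hT : ∀ i, T (v i) = (μ i : 𝕜) • v i) (hc : ∀ i, μ i ≤ c)
    (hx : x ∈ Submodule.span 𝕜 (Set.range v)) :
    RCLike.re ⟪x, T x⟫_𝕜 ≤ c * ‖x‖ ^ 2 := by
  simpa using hv.mul_norm_sq_le_re_inner_apply (T := -T) (μ := -μ) (c := -c)
    (fun i => by simp [hT]) (fun i => neg_le_neg (hc i)) hx

end Rayleigh

namespace LinearMap.IsSymmetric

variable {𝕜 E : Type*} [RCLike 𝕜] [NormedAddCommGroup E] [InnerProductSpace 𝕜 E]
  [FiniteDimensional 𝕜 E] {T : E →ₗ[𝕜] E} (hT : T.IsSymmetric) {n : ℕ}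
  (hn : Module.finrank 𝕜 E = n)

theorem exists_finrank_eq_forall_eigenvalues_mul_le (k : Fin n) :
    ∃ V : Submodule 𝕜 E, Module.finrank 𝕜 V = k + 1 ∧
      ∀ x ∈ V, hT.eigenvalues hn k * ‖x‖ ^ 2 ≤ RCLike.re ⟪x, T x⟫_𝕜 := by
  have hv := (hT.eigenvectorBasis hn).orthonormal.comp _
    (Subtype.val_injective (p := (· ∈ Set.Iic k)))
  refine ⟨Submodule.span 𝕜 (Set.range (hT.eigenvectorBasis hn ∘ ((↑) : Set.Iic k → Fin n))),
    ?_, fun x hx => ?_⟩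
  · rw [finrank_span_eq_card hv.linearIndependent, Fintype.card_Iic, Fin.card_Iic]
  · exact hv.mul_norm_sq_le_re_inner_apply (fun j => hT.apply_eigenvectorBasis hn j)
      (fun j => hT.eigenvalues_antitone hn j.2) hx

theorem le_eigenvalues_of_forall_mul_le (k : Fin n) {W : Submodule 𝕜 E}
    (hW : k + 1 ≤ Module.finrank 𝕜 W) {c : ℝ}
    (hc : ∀ x ∈ W, c * ‖x‖ ^ 2 ≤ RCLike.re ⟪x, T x⟫_𝕜) :
    c ≤ hT.eigenvalues hn k := by
  have hv := (hT.eigenvectorBasis hn).orthonormal.comp _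
    (Subtype.val_injective (p := (· ∈ Set.Ici k)))
  set V := Submodule.span 𝕜 (Set.range (hT.eigenvectorBasis hn ∘ ((↑) : Set.Ici k → Fin n)))
  have hV : Module.finrank 𝕜 V = n - k := by
    rw [finrank_span_eq_card hv.linearIndependent, Fintype.card_Ici, Fin.card_Ici]
  obtain ⟨x, ⟨hxV, hxW⟩, hx⟩ : ∃ x ∈ V ⊓ W, x ≠ 0 := by
    refine Submodule.exists_mem_ne_zero_of_ne_bot fun h => ?_
    have := Submodule.finrank_add_finrank_le_of_disjoint (disjoint_iff.mpr h)
    omega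
  have hxT := hv.re_inner_apply_le_mul_norm_sq (fun j => hT.apply_eigenvectorBasis hn j)
    (fun j => hT.eigenvalues_antitone hn j.2) hxV
  exact le_of_mul_le_mul_right ((hc x hxW).trans hxT) (by positivity)

end LinearMap.IsSymmetric

theorem Submodule.finrank_add_le_finrank_inf_comap {K E : Type*} [DivisionRing K]
    [AddCommGroup E] [Module K E] [FiniteDimensional K E] (U V : Submodule K E)
    (f : E →ₗ[K] E) :
    Module.finrank K U + Module.finrank K V ≤
      Module.finrank K ↥(U ⊓ V.comap f) + Module.finrank K E := by
  have hcomap : V.comap f = LinearMap.ker (V.mkQ ∘ₗ f) := by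
    rw [LinearMap.ker_comp, Submodule.ker_mkQ]
  have hker := LinearMap.finrank_range_add_finrank_ker (V.mkQ ∘ₗ f)
  have hrange := Submodule.finrank_le (LinearMap.range (V.mkQ ∘ₗ f))
  have hquot := Submodule.finrank_quotient_add_finrank V
  have hsup := Submodule.finrank_sup_add_finrank_inf_eq U (V.comap f)
  have hsup_le := Submodule.finrank_le (U ⊔ V.comap f)
  rw [hcomap] at hsup hsup_le ⊢
  omega

theorem LinearMap.IsSymmetric.mul_mul_norm_sq_le_re_inner_apply {𝕜 E : Type*} [RCLike 𝕜]
    [NormedAddCommGroup E] [InnerProductSpace 𝕜 E] {S A : E →ₗ[𝕜] E} (hS : S.IsSymmetric)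
    {U V : Submodule 𝕜 E} {c d : ℝ} (hd : 0 ≤ d)
    (hU : ∀ x ∈ U, c * ‖x‖ ^ 2 ≤ RCLike.re ⟪x, S (S x)⟫_𝕜)
    (hV : ∀ y ∈ V, d * ‖y‖ ^ 2 ≤ RCLike.re ⟪y, A y⟫_𝕜) {x : E} (hx : x ∈ U ⊓ V.comap S) :
    c * d * ‖x‖ ^ 2 ≤ RCLike.re ⟪x, S (A (S x))⟫_𝕜 := by
  have hSx : RCLike.re ⟪x, S (S x)⟫_𝕜 = ‖S x‖ ^ 2 := by
    rw [← hS, inner_self_eq_norm_sq]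
  rw [← hS]
  calc c * d * ‖x‖ ^ 2 = d * (c * ‖x‖ ^ 2) := by ring
    _ ≤ d * ‖S x‖ ^ 2 := mul_le_mul_of_nonneg_left (hSx ▸ hU x hx.1) hd
    _ ≤ RCLike.re ⟪S x, A (S x)⟫_𝕜 := hV _ hx.2

namespace EuclideanSpace

variable {𝕜 m l : Type*} [RCLike 𝕜]

def kron (u : EuclideanSpace 𝕜 m) (w : EuclideanSpace 𝕜 l) : EuclideanSpace 𝕜 (m × l) :=
  WithLp.toLp 2 fun p => u p.1 * w p.2

theorem smul_kron {R : Type*} [SMul R 𝕜] [IsScalarTower R 𝕜 𝕜] (c : R)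
    (u : EuclideanSpace 𝕜 m) (w : EuclideanSpace 𝕜 l) :
    kron (c • u) w = c • kron u w := by
  ext p
  simp [kron, smul_mul_assoc]

variable [Fintype m] [Fintype l]

theorem inner_kron (u u' : EuclideanSpace 𝕜 m) (w w' : EuclideanSpace 𝕜 l) :
    ⟪kron u w, kron u' w'⟫_𝕜 = ⟪u, u'⟫_𝕜 * ⟪w, w'⟫_𝕜 := by
  simp only [PiLp.inner_apply, kron, RCLike.inner_apply, Fintype.sum_prod_type,
    Finset.sum_mul_sum, map_mul]
  exact Finset.sum_congr rfl fun _ _ => Finset.sum_congr rfl fun _ _ => by ring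

theorem _root_.Orthonormal.kron {ι κ : Type*} {u : ι → EuclideanSpace 𝕜 m}
    {w : κ → EuclideanSpace 𝕜 l} (hu : Orthonormal 𝕜 u) (hw : Orthonormal 𝕜 w) :
    Orthonormal 𝕜 fun p : ι × κ => kron (u p.1) (w p.2) := by
  classical
  rw [orthonormal_iff_ite] at hu hw ⊢
  rintro ⟨i, j⟩ ⟨i', j'⟩
  simp only [inner_kron, hu, hw, Prod.mk.injEq, ite_and, ite_zero_mul, one_mul]

theorem _root_.Matrix.toEuclideanLin_kronecker_kron [DecidableEq m] [DecidableEq l]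
    (A : Matrix m m 𝕜) (B : Matrix l l 𝕜) (u : EuclideanSpace 𝕜 m) (w : EuclideanSpace 𝕜 l) :
    toEuclideanLin (A ⊗ₖ B) (kron u w) = kron (toEuclideanLin A u) (toEuclideanLin B w) := by
  ext ⟨a, b⟩
  simp only [kron, toLpLin_apply, mulVec, dotProduct, Fintype.sum_prod_type,
    kroneckerMap_apply, Finset.sum_mul_sum]
  exact Finset.sum_congr rfl fun _ _ => Finset.sum_congr rfl fun _ _ => by ring

end EuclideanSpace

theorem Matrix.IsHermitian.kronecker {α m l : Type*} [CommMagma α] [StarMul α]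
    {A : Matrix m m α} {B : Matrix l l α} (hA : A.IsHermitian) (hB : B.IsHermitian) :
    (A ⊗ₖ B).IsHermitian := by
  rw [IsHermitian, conjTranspose_kronecker, hA.eq, hB.eq]

namespace Matrix.PosSemidef

variable {n 𝕜 : Type*} [Fintype n] [DecidableEq n] [RCLike 𝕜] {A : Matrix n n 𝕜}

theorem isHermitian_sqrt (hA : A.PosSemidef) : hA.sqrt.IsHermitian := by
  have hd : (diagonal ((↑) ∘ (fun x : ℝ => Real.sqrt x) ∘ hA.1.eigenvalues) :
      Matrix n n 𝕜).IsHermitian :=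
    isHermitian_diagonal_iff.mpr fun i => by simp [IsSelfAdjoint]
  simpa [Matrix.PosSemidef.sqrt, star_eq_conjTranspose] using
    isHermitian_mul_mul_conjTranspose (hA.1.eigenvectorUnitary : Matrix n n 𝕜) hd

theorem sqrt_mul_self (hA : A.PosSemidef) : hA.sqrt * hA.sqrt = A := by
  set U := hA.1.eigenvectorUnitary
  set d : Matrix n n 𝕜 := diagonal ((↑) ∘ (fun x : ℝ => Real.sqrt x) ∘ hA.1.eigenvalues)
  have hdd : d * d = diagonal (RCLike.ofReal ∘ hA.1.eigenvalues) := by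
    rw [diagonal_mul_diagonal]
    congr 1
    funext i
    simp [← RCLike.ofReal_mul, Real.mul_self_sqrt (hA.eigenvalues_nonneg i)]
  calc hA.sqrt * hA.sqrt = (U : Matrix n n 𝕜) * (d * d) * star (U : Matrix n n 𝕜) := by
        simp only [Matrix.PosSemidef.sqrt, Matrix.mul_assoc]
        rw [← Matrix.mul_assoc (star (U : Matrix n n 𝕜)) (U : Matrix n n 𝕜),
          Unitary.coe_star_mul_self, Matrix.one_mul]
    _ = A := by
        rw [hdd]
        conv_rhs => rw [hA.1.spectral_theorem, Unitary.conjStarAlgAut_apply]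

end Matrix.PosSemidef

namespace Matrix.IsHermitian

variable {n : Type*} [Fintype n] [DecidableEq n] {M : Matrix n n ℂ}

theorem eigAsc_eq_eigenvalues₀ (hM : M.IsHermitian) {k : ℕ} (hk : k < Fintype.card n) :
    eigAsc M k = hM.eigenvalues₀ (Fin.rev ⟨k, hk⟩) := by
  have hmap : Finset.univ.val.map hM.eigenvalues = ↑(List.ofFn (hM.eigenvalues₀ ∘ Fin.rev)) := by
    calc Finset.univ.val.map hM.eigenvalues
        = (Finset.univ.val.map (Fintype.equivOfCardEq (Fintype.card_fin _)).symm).map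
            hM.eigenvalues₀ := by rw [Multiset.map_map]; rfl
      _ = (Finset.univ.val.map Fin.revPerm).map hM.eigenvalues₀ := by
        rw [Multiset.map_univ_val_equiv, Multiset.map_univ_val_equiv]
      _ = _ := by rw [Multiset.map_map, Fin.univ_val_map]; rfl
  have hsort : (Finset.univ.val.map hM.eigenvalues).sort (· ≤ ·) =
      List.ofFn (hM.eigenvalues₀ ∘ Fin.rev) := by
    rw [hmap, Multiset.coe_sort]
    apply List.mergeSort_of_pairwise
    simp_rw [decide_eq_true_eq, ← List.sortedLE_iff_pairwise]
    exact (hM.eigenvalues₀_antitone.comp Fin.rev_anti).sortedLE_ofFn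
  rw [eigAsc, dif_pos hM, hsort, List.getD_eq_getElem _ _ (by simpa using hk), List.getElem_ofFn]
  rfl

theorem exists_finrank_eq_forall_eigAsc_mul_le (hM : M.IsHermitian) {k : ℕ}
    (hk : k < Fintype.card n) :
    ∃ V : Submodule ℂ (EuclideanSpace ℂ n), Module.finrank ℂ V = Fintype.card n - k ∧
      ∀ x ∈ V, eigAsc M k * ‖x‖ ^ 2 ≤ RCLike.re ⟪x, toEuclideanLin M x⟫_ℂ := by
  obtain ⟨V, hV, hMV⟩ := (isSymmetric_toEuclideanLin_iff.mpr hM)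
    |>.exists_finrank_eq_forall_eigenvalues_mul_le finrank_euclideanSpace (Fin.rev ⟨k, hk⟩)
  refine ⟨V, by rw [hV, Fin.val_rev, Fin.val_mk]; omega, ?_⟩
  rw [hM.eigAsc_eq_eigenvalues₀ hk]
  exact hMV

theorem le_eigAsc_of_forall_mul_le (hM : M.IsHermitian) {k : ℕ} (hk : k < Fintype.card n)
    {W : Submodule ℂ (EuclideanSpace ℂ n)} (hW : Fintype.card n - k ≤ Module.finrank ℂ W)
    {c : ℝ} (hc : ∀ x ∈ W, c * ‖x‖ ^ 2 ≤ RCLike.re ⟪x, toEuclideanLin M x⟫_ℂ) :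
    c ≤ eigAsc M k := by
  rw [hM.eigAsc_eq_eigenvalues₀ hk]
  exact (isSymmetric_toEuclideanLin_iff.mpr hM).le_eigenvalues_of_forall_mul_le
    finrank_euclideanSpace _ (by rw [Fin.val_rev, Fin.val_mk]; omega) hc

theorem exists_finrank_eq_forall_eigAsc_mul_le_kronecker_one (hM : M.IsHermitian) {k : ℕ}
    (hk : k < Fintype.card n) (l : Type*) [Fintype l] [DecidableEq l] :
    ∃ U : Submodule ℂ (EuclideanSpace ℂ (n × l)),
      Module.finrank ℂ U = (Fintype.card n - k) * Fintype.card l ∧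
      ∀ x ∈ U, eigAsc M k * ‖x‖ ^ 2 ≤
        RCLike.re ⟪x, toEuclideanLin (M ⊗ₖ (1 : Matrix l l ℂ)) x⟫_ℂ := by
  set hT := isSymmetric_toEuclideanLin_iff.mpr hM
  set b := hT.eigenvectorBasis finrank_euclideanSpace
  set K := Fin.rev ⟨k, hk⟩
  set v : Set.Iic K × l → EuclideanSpace ℂ (n × l) :=
    fun p => EuclideanSpace.kron (b p.1) (EuclideanSpace.basisFun l ℂ p.2)
  have hv : Orthonormal ℂ v :=
    (b.orthonormal.comp _ Subtype.val_injective).kron (EuclideanSpace.basisFun l ℂ).orthonormal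
  have hMv : ∀ p, toEuclideanLin (M ⊗ₖ (1 : Matrix l l ℂ)) (v p) =
      (hT.eigenvalues finrank_euclideanSpace p.1 : ℂ) • v p := fun p => by
    simp [v, b, toEuclideanLin_kronecker_kron, EuclideanSpace.smul_kron]
  refine ⟨Submodule.span ℂ (Set.range v), ?_, fun x hx => ?_⟩
  · rw [finrank_span_eq_card hv.linearIndependent, Fintype.card_prod, Fintype.card_Iic,
      Fin.card_Iic, Fin.val_rev, Fin.val_mk]
    congr 1
    omega
  · rw [hM.eigAsc_eq_eigenvalues₀ hk]
    exact hv.mul_norm_sq_le_re_inner_apply hMv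
      (fun p => hT.eigenvalues_antitone finrank_euclideanSpace p.1.2) hx

end Matrix.IsHermitian

theorem Matrix.PosSemidef.eigAsc_nonneg {n : Type*} [Fintype n] [DecidableEq n]
    {A : Matrix n n ℂ} (hA : A.PosSemidef) {k : ℕ} (hk : k < Fintype.card n) :
    0 ≤ eigAsc A k := by
  rw [hA.1.eigAsc_eq_eigenvalues₀ hk]
  simpa [IsHermitian.eigenvalues] using
    hA.eigenvalues_nonneg (Fintype.equivOfCardEq (Fintype.card_fin _) (Fin.rev ⟨k, hk⟩))

theorem stmt9_general (N nt ρ : ℕ)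
    (R : Matrix (Fin N) (Fin N) ℂ) (hR : R.PosSemidef) (hρ : R.rank = ρ)
    (σsq : ℝ) (hσ : σsq = eigAsc R (N - ρ))
    (D : Matrix (Fin N × Fin nt) (Fin N × Fin nt) ℂ)
    (Θ : Matrix (Fin N × Fin nt) (Fin N × Fin nt) ℂ)
    (hΘ : Θ = (hR.sqrt ⊗ₖ (1 : Matrix (Fin nt) (Fin nt) ℂ)) * (D * Dᴴ) *
      (hR.sqrt ⊗ₖ (1 : Matrix (Fin nt) (Fin nt) ℂ)))
    (i : ℕ) (hi1 : 1 ≤ i) (hi : i ≤ ρ * nt) :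
    σsq * eigAsc (D * Dᴴ) (i - 1) ≤ eigAsc Θ (N * nt - ρ * nt + i - 1) := by
  subst hσ hΘ
  set B := hR.sqrt ⊗ₖ (1 : Matrix (Fin nt) (Fin nt) ℂ)
  have hA := posSemidef_self_mul_conjTranspose D
  have hB : B.IsHermitian := hR.isHermitian_sqrt.kronecker isHermitian_one
  have hBB : toEuclideanLin B ∘ₗ toEuclideanLin B =
      toEuclideanLin (R ⊗ₖ (1 : Matrix (Fin nt) (Fin nt) ℂ)) := by
    rw [← toLpLin_mul_same, ← mul_kronecker_mul, hR.sqrt_mul_self, Matrix.one_mul]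
  have hρN : ρ ≤ N := hρ ▸ R.rank_le_width
  have hρpos : 0 < ρ := Nat.pos_of_ne_zero (by rintro rfl; omega)
  have hρnt : ρ * nt ≤ N * nt := Nat.mul_le_mul_right nt hρN
  obtain ⟨U, hU, hRU⟩ := hR.1.exists_finrank_eq_forall_eigAsc_mul_le_kronecker_one
    (k := N - ρ) (by simp; omega) (Fin nt)
  obtain ⟨V, hV, hAV⟩ := hA.1.exists_finrank_eq_forall_eigAsc_mul_le (k := i - 1) (by simp; omega)
  have hW := Submodule.finrank_add_le_finrank_inf_comap U V (toEuclideanLin B)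
  simp only [hU, hV, finrank_euclideanSpace, Fintype.card_prod, Fintype.card_fin,
    Nat.sub_sub_self hρN] at hW
  have hΘ : (B * (D * Dᴴ) * B).IsHermitian := by
    simpa only [hB.eq] using isHermitian_conjTranspose_mul_mul B hA.1
  refine hΘ.le_eigAsc_of_forall_mul_le (by simp; omega) (W := U ⊓ V.comap (toEuclideanLin B))
    (by simp; omega) fun x hx => ?_
  rw [toLpLin_mul_same, toLpLin_mul_same]
  refine (isSymmetric_toEuclideanLin_iff.mpr hB).mul_mul_norm_sq_le_re_inner_apply
    (hA.eigAsc_nonneg (by simp; omega)) (fun y hy => ?_) hAV hx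
  rw [← LinearMap.comp_apply, hBB]
  exact hRU y hy

/-- For `Θ = (R^{1/2} ⊗ I_{n_t}) (D Dᴴ) (R^{1/2} ⊗ I_{n_t})` with `R` positive
semidefinite of rank `ρ ≥ 1`, smallest nonzero eigenvalue `σ² = λ_{N-ρ+1}(R)`, and
`D` invertible of size `p = N n_t`, the nonzero eigenvalues of `Θ` satisfy
`λ_{p-ρn_t+i}(Θ) ≥ σ² · λ_i(D Dᴴ)` for `1 ≤ i ≤ ρ n_t`
(eigenvalues in ascending order). -/
theorem stmt9 (N nt ρ : ℕ) (hnt : 1 ≤ nt) (hρ1 : 1 ≤ ρ)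
    (R : Matrix (Fin N) (Fin N) ℂ) (hR : R.PosSemidef) (hρ : R.rank = ρ)
    (σsq : ℝ) (hσ : σsq = eigAsc R (N - ρ))
    (D : Matrix (Fin N × Fin nt) (Fin N × Fin nt) ℂ) (hD : IsUnit D)
    (Θ : Matrix (Fin N × Fin nt) (Fin N × Fin nt) ℂ)
    (hΘ : Θ = (hR.sqrt ⊗ₖ (1 : Matrix (Fin nt) (Fin nt) ℂ)) * (D * Dᴴ) *
      (hR.sqrt ⊗ₖ (1 : Matrix (Fin nt) (Fin nt) ℂ)))
    (i : ℕ) (hi1 : 1 ≤ i) (hi : i ≤ ρ * nt) :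
    σsq * eigAsc (D * Dᴴ) (i - 1) ≤ eigAsc Θ (N * nt - ρ * nt + i - 1) :=
  stmt9_general N nt ρ R hR hρ σsq hσ D Θ hΘ i hi1 hi
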